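/- Define, for positive integers n, k, ℓ with ℓ dividing n and b := n/ℓ, R(n,k,ℓ) = (1 + Σ_{i=⌈k/ℓ⌉}^{b} C(b,i) + C(b, ⌊k/ℓ⌋)·C(n − ⌊k/ℓ⌋·ℓ, n − k)) / 2^n. For every ε > 0 there exists N such that for all n ≥ N and all integers k, ℓ with 1 ≤ k < n/2, 2 ≤ ℓ < n, ℓ dividing n, and (n−k) mod ℓ ≠ 0, one has R(n,k,ℓ) ≤ ε; that is, the ratio of Pareto optimal solutions of OneJump-ZeroRoyalRoad converges to 0 as n → ∞, uniformly over all admissible parameters k and ℓ. -/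

import Mathlib

open Finset


/-- Key: choosing j full blocks and r < ℓ cells from the rest gives at most C(bℓ, jℓ+r). -/
lemma key_choose (ℓ : ℕ) : ∀ b j r : ℕ, j ≤ b → r < ℓ →
    b.choose j * ((b - j) * ℓ).choose r ≤ (b * ℓ).choose (j * ℓ + r) := by
  intro b
  induction b with
  | zero =>
    intro j r hj hr
    interval_cases j
    simp
  | succ b ih =>
    intro j r hj hr
    match j with
    | 0 => simp
    | j + 1 =>
      by_cases hjb : j + 1 ≤ b
      · set K := (j + 1) * ℓ + r with hK
        have hsplit : (b + 1) * ℓ = ℓ + b * ℓ := by ring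
        set T : Finset (ℕ × ℕ) := (Finset.range (r + 1)).image (fun a => (a, K - a)) with hT
        have hmemT : (ℓ, j * ℓ + r) ∉ T := by
          simp only [hT, Finset.mem_image, Finset.mem_range, Prod.mk.injEq]
          rintro ⟨a, ha, rfl, -⟩
          omega
        have hsub : insert (ℓ, j * ℓ + r) T ⊆ Finset.HasAntidiagonal.antidiagonal K := by
          intro p hp
          rw [Finset.mem_insert] at hp
          rcases hp with rfl | hp
          · rw [Finset.HasAntidiagonal.mem_antidiagonal, hK]; ring
          · simp only [hT, Finset.mem_image, Finset.mem_range] at hp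
            obtain ⟨a, ha, rfl⟩ := hp
            rw [Finset.HasAntidiagonal.mem_antidiagonal]
            have : a ≤ K := by
              have : r ≤ K := by simp [hK]
              omega
            omega
        have hTsum : ∑ p ∈ T, ℓ.choose p.1 * (b * ℓ).choose p.2
            = ∑ a ∈ Finset.range (r + 1), ℓ.choose a * (b * ℓ).choose (K - a) := by
          rw [hT, Finset.sum_image]
          intro x _ y _ h
          exact (Prod.mk.injEq _ _ _ _).mp h |>.1
        have step2 : b.choose (j + 1) * ((b - j) * ℓ).choose r
            ≤ ∑ a ∈ Finset.range (r + 1), ℓ.choose a * (b * ℓ).choose (K - a) := by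
          have hbj : (b - j) * ℓ = ℓ + (b - (j + 1)) * ℓ := by
            have h1 : b - j = (b - (j + 1)) + 1 := by omega
            rw [h1]; ring
          rw [hbj, Nat.add_choose_eq, Finset.Nat.sum_antidiagonal_eq_sum_range_succ_mk,
            Finset.mul_sum]
          apply Finset.sum_le_sum
          intro a ha
          have haR : a ≤ r := by
            have := Finset.mem_range.mp ha; omega
          have hKa : K - a = (j + 1) * ℓ + (r - a) := by
            rw [hK]
            exact Nat.add_sub_assoc haR _
          rw [hKa]
          calc b.choose (j + 1) * (ℓ.choose a * ((b - (j + 1)) * ℓ).choose (r - a))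
              = ℓ.choose a * (b.choose (j + 1) * ((b - (j + 1)) * ℓ).choose (r - a)) := by ring
            _ ≤ ℓ.choose a * (b * ℓ).choose ((j + 1) * ℓ + (r - a)) :=
                Nat.mul_le_mul_left _ (ih (j + 1) (r - a) hjb (by omega))
        have step1 : b.choose j * ((b - j) * ℓ).choose r
            ≤ ℓ.choose ℓ * (b * ℓ).choose (j * ℓ + r) := by
          rw [Nat.choose_self, one_mul]
          exact ih j r (by omega) hr
        calc (b + 1).choose (j + 1) * ((b + 1 - (j + 1)) * ℓ).choose r
            = b.choose j * ((b - j) * ℓ).choose r + b.choose (j + 1) * ((b - j) * ℓ).choose r := by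
              rw [Nat.succ_sub_succ, Nat.choose_succ_succ, add_mul]
          _ ≤ ℓ.choose ℓ * (b * ℓ).choose (j * ℓ + r)
              + ∑ a ∈ Finset.range (r + 1), ℓ.choose a * (b * ℓ).choose (K - a) :=
              add_le_add step1 step2
          _ = ∑ p ∈ insert (ℓ, j * ℓ + r) T, ℓ.choose p.1 * (b * ℓ).choose p.2 := by
              rw [Finset.sum_insert hmemT, hTsum]
          _ ≤ ∑ p ∈ Finset.HasAntidiagonal.antidiagonal K, ℓ.choose p.1 * (b * ℓ).choose p.2 :=
              Finset.sum_le_sum_of_subset hsub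
          _ = (ℓ + b * ℓ).choose K := (Nat.add_choose_eq ℓ (b * ℓ) K).symm
          _ = ((b + 1) * ℓ).choose K := by rw [hsplit]
      · -- j = b
        have hje : j = b := by omega
        subst hje
        simp only [Nat.choose_self, one_mul, Nat.sub_self, Nat.zero_mul]
        cases r with
        | zero => simp
        | succ r => simp [Nat.choose_zero_succ]


lemma cb_sq (m : ℕ) : Nat.centralBinom m ^ 2 * (3 * m + 1) ≤ 16 ^ m := by
  induction m with
  | zero => simp [Nat.centralBinom]
  | succ m ih =>
    have h := Nat.succ_mul_centralBinom_succ m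
    have hpos : 0 < (m + 1) ^ 2 := by positivity
    have key : Nat.centralBinom (m + 1) ^ 2 * (3 * (m + 1) + 1) * (m + 1) ^ 2
        ≤ 16 ^ (m + 1) * (m + 1) ^ 2 := by
      have e : Nat.centralBinom (m + 1) ^ 2 * (m + 1) ^ 2
          = 4 * (2 * m + 1) ^ 2 * Nat.centralBinom m ^ 2 := by
        have := congrArg (· ^ 2) h
        nlinarith [this]
      calc Nat.centralBinom (m + 1) ^ 2 * (3 * (m + 1) + 1) * (m + 1) ^ 2
          = (Nat.centralBinom (m + 1) ^ 2 * (m + 1) ^ 2) * (3 * m + 4) := by ring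
        _ = 4 * (2 * m + 1) ^ 2 * Nat.centralBinom m ^ 2 * (3 * m + 4) := by rw [e]
        _ = (4 * (2 * m + 1) ^ 2 * (3 * m + 4)) * Nat.centralBinom m ^ 2 := by ring
        _ ≤ (16 * (m + 1) ^ 2 * (3 * m + 1)) * Nat.centralBinom m ^ 2 := by
            apply Nat.mul_le_mul_right
            nlinarith
        _ = 16 * (m + 1) ^ 2 * (Nat.centralBinom m ^ 2 * (3 * m + 1)) := by ring
        _ ≤ 16 * (m + 1) ^ 2 * 16 ^ m := Nat.mul_le_mul_left _ ih
        _ = 16 ^ (m + 1) * (m + 1) ^ 2 := by ring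
    exact Nat.le_of_mul_le_mul_right key hpos

lemma mid_sq (n : ℕ) : (n.choose (n / 2)) ^ 2 * n ≤ 4 * 4 ^ n := by
  rcases Nat.even_or_odd n with ⟨m, hm⟩ | ⟨m, hm⟩
  · subst hm
    have h2 : (m + m) / 2 = m := by omega
    rw [h2]
    have : (m + m).choose m = Nat.centralBinom m := by
      rw [Nat.centralBinom]; congr 1; ring
    rw [this]
    calc Nat.centralBinom m ^ 2 * (m + m) ≤ Nat.centralBinom m ^ 2 * (3 * m + 1) := by
          apply Nat.mul_le_mul_left; omega
      _ ≤ 16 ^ m := cb_sq m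
      _ ≤ 4 * 4 ^ (m + m) := by
          have : (16 : ℕ) ^ m = 4 ^ (m + m) := by
            rw [show (16:ℕ) = 4 * 4 by norm_num, mul_pow, pow_add]
          omega
  · subst hm
    have h2 : (2 * m + 1) / 2 = m := by omega
    rw [h2]
    have hle : (2 * m + 1).choose m ≤ 2 * Nat.centralBinom m := by
      have hsymm : (2 * m + 1).choose m = (2 * m + 1).choose (m + 1) := by
        have h4 := Nat.choose_symm (show m + 1 ≤ 2 * m + 1 by omega)
        have h3 : 2 * m + 1 - (m + 1) = m := by omega
        rw [h3] at h4
        exact h4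
      rw [hsymm, Nat.choose_succ_succ]
      simp only [Nat.succ_eq_add_one]
      have c1 : (2 * m).choose m ≤ Nat.centralBinom m := le_of_eq (by rw [Nat.centralBinom])
      have c2 : (2 * m).choose (m + 1) ≤ Nat.centralBinom m := by
        have := Nat.choose_le_middle (m + 1) (2 * m)
        have hmid : (2 * m) / 2 = m := by omega
        rw [hmid] at this
        rw [Nat.centralBinom]
        exact this
      omega
    calc (2 * m + 1).choose m ^ 2 * (2 * m + 1)
        ≤ (2 * Nat.centralBinom m) ^ 2 * (3 * m + 1) := by
          apply Nat.mul_le_mul (Nat.pow_le_pow_left hle 2) (by omega)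
      _ = 4 * (Nat.centralBinom m ^ 2 * (3 * m + 1)) := by ring
      _ ≤ 4 * 16 ^ m := Nat.mul_le_mul_left _ (cb_sq m)
      _ ≤ 4 * 4 ^ (2 * m + 1) := by
          have : (16 : ℕ) ^ m ≤ 4 ^ (2 * m + 1) := by
            rw [pow_succ']
            calc (16:ℕ) ^ m = 4 ^ (2 * m) := by rw [pow_mul]; norm_num
              _ ≤ 4 * 4 ^ (2 * m) := by omega
            
          omega


lemma prod_le (n k ℓ : ℕ) (hl : 1 ≤ ℓ) (hln : ℓ ∣ n) (hk : k ≤ n) :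
    (n / ℓ).choose (k / ℓ) * (n - k / ℓ * ℓ).choose (n - k) ≤ n.choose k := by
  set b := n / ℓ with hb
  set j := k / ℓ with hj
  set r := k % ℓ with hr
  have hbn : b * ℓ = n := Nat.div_mul_cancel hln
  have hjr : j * ℓ + r = k := Nat.div_add_mod' k ℓ
  have hjl : j * ℓ ≤ k := by omega
  have hjb : j ≤ b := by
    rw [hb, hj]; exact Nat.div_le_div_right hk
  have hm : n - j * ℓ = (b - j) * ℓ := by
    rw [Nat.sub_mul, hbn]
  have hrl : r < ℓ := Nat.mod_lt _ (by omega)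
  have hnk : n - k ≤ (b - j) * ℓ := by omega
  have hdiff : (b - j) * ℓ - (n - k) = r := by omega
  have hsy : ((b - j) * ℓ).choose (n - k) = ((b - j) * ℓ).choose r := by
    rw [← hdiff]
    exact (Nat.choose_symm hnk).symm
  calc b.choose j * (n - j * ℓ).choose (n - k)
      = b.choose j * ((b - j) * ℓ).choose r := by rw [hm, hsy]
    _ ≤ (b * ℓ).choose (j * ℓ + r) := key_choose ℓ b j r hjb hrl
    _ = n.choose k := by rw [hbn, hjr]

/-- The ratio of Pareto optimal solutions of the OneJump–ZeroRoyalRoad problem (case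
(n−k) mod ℓ ≠ 0), with b = n/ℓ blocks:
R(n,k,ℓ) = (1 + Σ_{i=⌈k/ℓ⌉}^{b} C(b,i) + C(b,⌊k/ℓ⌋)·C(n − ⌊k/ℓ⌋·ℓ, n − k)) / 2^n. -/
noncomputable def Rojzr (n k ℓ : ℕ) : ℝ :=
  ((1 : ℝ) + ∑ i ∈ Finset.Icc ((k + ℓ - 1) / ℓ) (n / ℓ), ((n / ℓ).choose i : ℝ)
      + ((n / ℓ).choose (k / ℓ) : ℝ) * ((n - k / ℓ * ℓ).choose (n - k) : ℝ)) / 2 ^ n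

/-- For n ≥ 1 and admissible k, ℓ, the ratio is at most 4/√n. -/
lemma Rojzr_le (n k ℓ : ℕ) (hn : 1 ≤ n) (hk : 2 * k < n) (hℓ2 : 2 ≤ ℓ) (hd : ℓ ∣ n) :
    Rojzr n k ℓ ≤ 4 / Real.sqrt n := by
  set b := n / ℓ with hb
  set M := n.choose (n / 2) with hM
  -- natural number bounds
  have hS : ∑ i ∈ Finset.Icc ((k + ℓ - 1) / ℓ) b, b.choose i ≤ 2 ^ b := by
    calc ∑ i ∈ Finset.Icc ((k + ℓ - 1) / ℓ) b, b.choose i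
        ≤ ∑ i ∈ Finset.range (b + 1), b.choose i := by
          apply Finset.sum_le_sum_of_subset
          intro i hi
          rw [Finset.mem_Icc] at hi
          rw [Finset.mem_range]
          omega
      _ = 2 ^ b := Nat.sum_range_choose b
  have hP : (n / ℓ).choose (k / ℓ) * (n - k / ℓ * ℓ).choose (n - k) ≤ M :=
    le_trans (prod_le n k ℓ (by omega) hd (by omega)) (Nat.choose_le_middle k n)
  have hb2 : b ≤ n / 2 := Nat.div_le_div_left hℓ2 (by norm_num)
  have hNat : 1 + (∑ i ∈ Finset.Icc ((k + ℓ - 1) / ℓ) b, b.choose i)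
      + (n / ℓ).choose (k / ℓ) * (n - k / ℓ * ℓ).choose (n - k) ≤ 2 ^ (n / 2 + 1) + M := by
    have h1 : (1 : ℕ) ≤ 2 ^ (n / 2) := Nat.one_le_two_pow
    have h2 : (2 : ℕ) ^ b ≤ 2 ^ (n / 2) := Nat.pow_le_pow_right (by norm_num) hb2
    have h3 : (2 : ℕ) ^ (n / 2 + 1) = 2 ^ (n / 2) + 2 ^ (n / 2) := by ring
    omega
  -- real bounds
  have hsqrt_pos : (0 : ℝ) < Real.sqrt n := Real.sqrt_pos.mpr (by exact_mod_cast hn)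
  have hpow_pos : (0 : ℝ) < 2 ^ n := by positivity
  have hs1 : Real.sqrt n ≤ 2 ^ (n - n / 2) := by
    have hnat : n ≤ (2 ^ (n - n / 2)) ^ 2 := by
      have h1 : n < 2 ^ n := Nat.lt_two_pow_self
      have h2 : (2 : ℕ) ^ n ≤ 2 ^ (2 * (n - n / 2)) := Nat.pow_le_pow_right (by norm_num) (by omega)
      have h3 : (2 : ℕ) ^ (2 * (n - n / 2)) = (2 ^ (n - n / 2)) ^ 2 := by
        rw [← pow_mul, Nat.mul_comm]
      omega
    have := Real.sqrt_le_sqrt (show (n : ℝ) ≤ ((2 : ℝ) ^ (n - n / 2)) ^ 2 by exact_mod_cast hnat)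
    rwa [Real.sqrt_sq (by positivity)] at this
  have hs2 : (M : ℝ) * Real.sqrt n ≤ 2 * 2 ^ n := by
    have h := mid_sq n
    have hr : (M : ℝ) ^ 2 * n ≤ 4 * 4 ^ n := by exact_mod_cast h
    have h4 : (4 : ℝ) * 4 ^ n = (2 * 2 ^ n) ^ 2 := by
      rw [show (4 : ℝ) = 2 ^ 2 by norm_num, ← pow_mul, mul_pow, Nat.mul_comm]
      norm_num [pow_mul]
    calc (M : ℝ) * Real.sqrt n = Real.sqrt ((M : ℝ) ^ 2 * n) := by
          rw [Real.sqrt_mul (by positivity), Real.sqrt_sq (by positivity)]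
      _ ≤ Real.sqrt (4 * 4 ^ n) := Real.sqrt_le_sqrt hr
      _ = 2 * 2 ^ n := by rw [h4, Real.sqrt_sq (by positivity)]
  have hs3 : ((2 : ℝ) ^ (n / 2 + 1)) * Real.sqrt n ≤ 2 * 2 ^ n := by
    calc ((2 : ℝ) ^ (n / 2 + 1)) * Real.sqrt n ≤ 2 ^ (n / 2 + 1) * 2 ^ (n - n / 2) := by
          apply mul_le_mul_of_nonneg_left hs1 (by positivity)
      _ = 2 * 2 ^ n := by
          rw [← pow_add]
          rw [show n / 2 + 1 + (n - n / 2) = n + 1 by omega]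
          ring
  -- assemble
  have hcast : Rojzr n k ℓ = ((1 + (∑ i ∈ Finset.Icc ((k + ℓ - 1) / ℓ) b, b.choose i)
      + (n / ℓ).choose (k / ℓ) * (n - k / ℓ * ℓ).choose (n - k) : ℕ) : ℝ) / 2 ^ n := by
    rw [Rojzr]
    push_cast
    rfl
  rw [hcast, div_le_div_iff₀ hpow_pos hsqrt_pos]
  calc ((1 + (∑ i ∈ Finset.Icc ((k + ℓ - 1) / ℓ) b, b.choose i)
      + (n / ℓ).choose (k / ℓ) * (n - k / ℓ * ℓ).choose (n - k) : ℕ) : ℝ) * Real.sqrt n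
      ≤ ((2 ^ (n / 2 + 1) + M : ℕ) : ℝ) * Real.sqrt n := by
        apply mul_le_mul_of_nonneg_right _ (le_of_lt hsqrt_pos)
        exact_mod_cast hNat
    _ = (2 : ℝ) ^ (n / 2 + 1) * Real.sqrt n + (M : ℝ) * Real.sqrt n := by
        push_cast; ring
    _ ≤ 2 * 2 ^ n + 2 * 2 ^ n := add_le_add hs3 hs2
    _ = 4 * 2 ^ n := by ring

/-- the ratio of Pareto optimal solutions of OneJump–ZeroRoyalRoad converges to
0 as n → ∞, uniformly over all admissible parameters k and ℓ. -/
theorem OJZR_ratio_tendsto_zero :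
    ∀ ε : ℝ, 0 < ε → ∃ N : ℕ, ∀ n : ℕ, N ≤ n → ∀ k ℓ : ℕ,
      1 ≤ k → 2 * k < n → 2 ≤ ℓ → ℓ < n → ℓ ∣ n → (n - k) % ℓ ≠ 0 →
      Rojzr n k ℓ ≤ ε := by
  intro ε hε
  refine ⟨⌈(16 : ℝ) / ε ^ 2⌉₊ + 1, fun n hn k ℓ hk1 hkn hℓ2 hℓn hd _ => ?_⟩
  have hn1 : 1 ≤ n := by omega
  have hge : (16 : ℝ) / ε ^ 2 ≤ n := by
    calc (16 : ℝ) / ε ^ 2 ≤ ⌈(16 : ℝ) / ε ^ 2⌉₊ := Nat.le_ceil _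
      _ ≤ n := by exact_mod_cast (by omega : ⌈(16 : ℝ) / ε ^ 2⌉₊ ≤ n)
  have hsqrt : 4 / ε ≤ Real.sqrt n := by
    rw [Real.le_sqrt (by positivity) (by positivity)]
    calc (4 / ε) ^ 2 = 16 / ε ^ 2 := by rw [div_pow]; norm_num
      _ ≤ (n : ℝ) := hge
  have hsqrt_pos : (0 : ℝ) < Real.sqrt n := lt_of_lt_of_le (by positivity) hsqrt
  calc Rojzr n k ℓ ≤ 4 / Real.sqrt n := Rojzr_le n k ℓ hn1 hkn hℓ2 hd
    _ ≤ 4 / (4 / ε) := by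
        apply div_le_div_of_nonneg_left (by norm_num) (by positivity) hsqrt
    _ = ε := by field_simp
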